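/- For any two distinct rows of P^{⊗2}, exactly 6 columns have positive entries in both rows, exactly 4 columns have a positive entry in the first row and a negative entry in the second, exactly 4 columns have a negative entry in the first row and a positive entry in the second, and exactly 2 columns have negative entries in both rows. -/

import Mathlib

/-!
Every entry of `P2` is `±1/4`, so for two rows `x, y` the indicator of the pattern `(+,+)` in
column `j` is `4 (1/4 + x j) (1/4 + y j)`; negating `x` or `y` gives the other three patterns.
Summing over columns, each count is determined by the row sums, all equal to `1` because the
rows of `P` sum to `1`, and by the inner product of the two rows, which vanishes because `P`,
and hence `P ⊗ₖ P`, is orthogonal.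
-/

open Matrix Finset

noncomputable def P : Matrix (Fin 4) (Fin 4) ℝ :=
  (1/2 : ℝ) • !![1, 1, -1, 1; 1, 1, 1, -1; -1, 1, 1, 1; 1, -1, 1, 1]

/-- The Kronecker square `P^{⊗2}`, indexed by pairs in `{0,1,2,3}²`. -/
noncomputable def P2 : Matrix (Fin 4 × Fin 4) (Fin 4 × Fin 4) ℝ :=
  fun i j => P i.1 j.1 * P i.2 j.2

open scoped Kronecker

section SignCount

variable {ι K : Type*} [Fintype ι] [Field K] [LinearOrder K] [IsStrictOrderedRing K]
  {x y : ι → K} {c : K}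

lemma ite_pos_and_pos_eq (hc : 0 < c) {a b : K} (ha : a = c ∨ a = -c) (hb : b = c ∨ b = -c) :
    (if 0 < a ∧ 0 < b then 1 else 0) = (c + a) * (c + b) / (4 * c ^ 2) := by
  rcases ha with rfl | rfl <;> rcases hb with rfl | rfl <;> simp [hc, hc.le]
  field_simp
  norm_num

lemma card_filter_pos_and_pos_eq (hc : 0 < c) (hx : ∀ j, x j = c ∨ x j = -c)
    (hy : ∀ j, y j = c ∨ y j = -c) :
    (#{j | 0 < x j ∧ 0 < y j} : K) =
      (c ^ 2 * Fintype.card ι + c * (∑ j, x j + ∑ j, y j) + ∑ j, x j * y j) / (4 * c ^ 2) := by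
  rw [natCast_card_filter, sum_congr rfl fun j _ => ite_pos_and_pos_eq hc (hx j) (hy j),
    ← sum_div]
  congr 1
  simp only [add_mul, mul_add, sum_add_distrib, ← mul_sum, ← sum_mul, sum_const, card_univ,
    nsmul_eq_mul]
  ring

end SignCount

lemma P_apply_eq_or (a b : Fin 4) : P a b = 1 / 2 ∨ P a b = -(1 / 2) := by
  fin_cases a <;> fin_cases b <;> norm_num [P]

lemma sum_P_apply (a : Fin 4) : ∑ b, P a b = 1 := by
  fin_cases a <;> simp [P, Fin.sum_univ_four] <;> norm_num

lemma P_mul_transpose_self : P * Pᵀ = 1 := by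
  ext a b
  fin_cases a <;> fin_cases b <;> simp [P, mul_apply, Fin.sum_univ_four] <;> norm_num

lemma P2_eq_kronecker : P2 = P ⊗ₖ P := rfl

lemma P2_apply_eq_or (i j : Fin 4 × Fin 4) : P2 i j = 1 / 4 ∨ P2 i j = -(1 / 4) := by
  rcases P_apply_eq_or i.1 j.1 with h₁ | h₁ <;> rcases P_apply_eq_or i.2 j.2 with h₂ | h₂ <;>
    norm_num [P2, h₁, h₂]

lemma sum_P2_apply (i : Fin 4 × Fin 4) : ∑ j, P2 i j = 1 := by
  simp [P2, Fintype.sum_prod_type, ← mul_sum, sum_P_apply]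

lemma P2_mul_transpose_self : P2 * P2ᵀ = 1 := by
  rw [P2_eq_kronecker, ← kroneckerMap_transpose, ← mul_kronecker_mul, P_mul_transpose_self,
    one_kronecker_one]

lemma sum_P2_mul_P2_of_ne {i i' : Fin 4 × Fin 4} (h : i ≠ i') : ∑ j, P2 i j * P2 i' j = 0 := by
  simpa [mul_apply, one_apply_ne h] using congr_fun₂ P2_mul_transpose_self i i'

/-- For any two distinct rows of `P^{⊗2}`: 6 columns are `(+,+)`, 4 are
`(+,−)`, 4 are `(−,+)`, and 2 are `(−,−)`. -/
theorem P2_two_rows_sign_pattern (i i' : Fin 4 × Fin 4) (h : i ≠ i') :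
    (univ.filter (fun j => 0 < P2 i j ∧ 0 < P2 i' j)).card = 6 ∧
    (univ.filter (fun j => 0 < P2 i j ∧ P2 i' j < 0)).card = 4 ∧
    (univ.filter (fun j => P2 i j < 0 ∧ 0 < P2 i' j)).card = 4 ∧
    (univ.filter (fun j => P2 i j < 0 ∧ P2 i' j < 0)).card = 2 := by
  have hneg (k) : ∀ j, (-P2 k) j = 1 / 4 ∨ (-P2 k) j = -(1 / 4) := fun j => by
    simpa [neg_eq_iff_eq_neg, or_comm] using P2_apply_eq_or k j
  have hc : (0 : ℝ) < 1 / 4 := by norm_num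
  have h₁ := card_filter_pos_and_pos_eq hc (P2_apply_eq_or i) (P2_apply_eq_or i')
  have h₂ := card_filter_pos_and_pos_eq hc (P2_apply_eq_or i) (hneg i')
  have h₃ := card_filter_pos_and_pos_eq hc (hneg i) (P2_apply_eq_or i')
  have h₄ := card_filter_pos_and_pos_eq hc (hneg i) (hneg i')
  norm_num [sum_P2_apply, sum_P2_mul_P2_of_ne h] at h₁ h₂ h₃ h₄
  refine ⟨?_, ?_, ?_, ?_⟩ <;> assumption_mod_cast
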